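/- For monotone increasing functions f and g on a complete lattice, (f + g)* = (f + g*)*, where h* denotes the closure operation. -/
import Mathlib


/-- The least fixedpoint of `f` that is above `X` (for monotone increasing `f`
on a complete lattice, this infimum is itself a fixedpoint, so it is the least
fixedpoint of `f` that is ≥ `X`). -/
def lfpAbove {α : Type*} [CompleteLattice α] (f : α → α) (X : α) : α :=
  sInf {Y | f Y = Y ∧ X ≤ Y}

section Aux

variable {α : Type*} [CompleteLattice α] {h : α → α}

lemma lfpAbove_le {X Y : α} (hY : h Y = Y) (hXY : X ≤ Y) : lfpAbove h X ≤ Y :=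
  sInf_le ⟨hY, hXY⟩

lemma le_lfpAbove (X : α) : X ≤ lfpAbove h X :=
  le_sInf fun _ hY => hY.2

lemma lfpAbove_fixed (hm : Monotone h) (hi : ∀ X : α, X ≤ h X) (X : α) :
    h (lfpAbove h X) = lfpAbove h X := by
  refine le_antisymm (le_sInf fun Y hY => ?_) (hi _)
  calc h (lfpAbove h X) ≤ h Y := hm (sInf_le hY)
    _ = Y := hY.1

end Aux

theorem stmt_9 {α : Type*} [CompleteLattice α] (f g : α → α)
    (hf : Monotone f) (hg : Monotone g)
    (hfi : ∀ X : α, X ≤ f X) (hgi : ∀ X : α, X ≤ g X) :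
    lfpAbove (fun X => f X ⊔ g X) = lfpAbove (fun X => f X ⊔ lfpAbove g X) := by
  have hgstar_mono : Monotone (lfpAbove g) := fun X X' hXX' =>
    le_sInf fun Y hY => sInf_le ⟨hY.1, hXX'.trans hY.2⟩
  have hfg_mono : Monotone (fun X => f X ⊔ g X) := fun X X' h =>
    sup_le_sup (hf h) (hg h)
  have hfg_infl : ∀ X : α, X ≤ f X ⊔ g X := fun X => (hfi X).trans le_sup_left
  have hfgs_mono : Monotone (fun X => f X ⊔ lfpAbove g X) := fun X X' h =>
    sup_le_sup (hf h) (hgstar_mono h)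
  have hfgs_infl : ∀ X : α, X ≤ f X ⊔ lfpAbove g X := fun X =>
    (hfi X).trans le_sup_left
  funext X
  apply le_antisymm
  · -- B := lfpAbove (f ⊔ g*) X is a fixed point of f ⊔ g above X
    set B := lfpAbove (fun X => f X ⊔ lfpAbove g X) X with hB
    have hBfix : f B ⊔ lfpAbove g B = B := lfpAbove_fixed hfgs_mono hfgs_infl X
    have hfB : f B ≤ B := le_sup_left.trans hBfix.le
    have hgB : g B ≤ B := by
      have h1 : g B ≤ lfpAbove g B := by
        have := lfpAbove_fixed hg hgi B
        calc g B ≤ g (lfpAbove g B) := hg (le_lfpAbove B)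
          _ = lfpAbove g B := this
      exact h1.trans (le_sup_right.trans hBfix.le)
    exact lfpAbove_le (le_antisymm (sup_le hfB hgB) (hfg_infl B)) (le_lfpAbove X)
  · -- A := lfpAbove (f ⊔ g) X is a fixed point of f ⊔ g* above X
    set A := lfpAbove (fun X => f X ⊔ g X) X with hA
    have hAfix : f A ⊔ g A = A := lfpAbove_fixed hfg_mono hfg_infl X
    have hfA : f A ≤ A := le_sup_left.trans hAfix.le
    have hgA : g A = A := le_antisymm (le_sup_right.trans hAfix.le) (hgi A)
    have hgsA : lfpAbove g A ≤ A := lfpAbove_le hgA le_rfl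
    exact lfpAbove_le (le_antisymm (sup_le hfA hgsA) (hfgs_infl A)) (le_lfpAbove X)
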